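/- Consider the two-node coupled tent map T(x₁,x₂) = ((1−c)f(x₁)+cf(x₂), cf(x₁)+(1−c)f(x₂)) with f the standard tent map and coupling coefficient c ∈ (1/4, 3/4). Then for every initial point (x₁(0),x₂(0)) ∈ [0,1]², the orbit synchronizes: |x₁(n) − x₂(n)| ≤ (2|1−2c|)ⁿ·|x₁(0) − x₂(0)| for all n, and hence |x₁(n) − x₂(n)| → 0 as n → ∞. -/
import Mathlib

theorem stmt_8 (f : ℝ → ℝ) (hf : ∀ x, f x = 1 - 2 * |x - 1/2|)
    (c : ℝ) (hc : 1/4 < c ∧ c < 3/4)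
    (x : ℕ → ℝ × ℝ)
    (hx0 : (x 0).1 ∈ Set.Icc (0:ℝ) 1 ∧ (x 0).2 ∈ Set.Icc (0:ℝ) 1)
    (hiter : ∀ n, x (n + 1)
      = ((1 - c) * f (x n).1 + c * f (x n).2, c * f (x n).1 + (1 - c) * f (x n).2)) :
    (∀ n, |(x n).1 - (x n).2| ≤ (2 * |1 - 2 * c|) ^ n * |(x 0).1 - (x 0).2|)
    ∧ Filter.Tendsto (fun n => |(x n).1 - (x n).2|) Filter.atTop (nhds 0) := by
  obtain ⟨hc1, hc2⟩ := hc
  have hr : 2 * |1 - 2 * c| < 1 := by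
    have : |1 - 2 * c| < 1/2 := by
      rw [abs_lt]; constructor <;> linarith
    linarith
  have hr0 : 0 ≤ 2 * |1 - 2 * c| := by positivity
  have hstep : ∀ n, |(x (n+1)).1 - (x (n+1)).2| ≤ (2 * |1 - 2 * c|) * |(x n).1 - (x n).2| := by
    intro n
    have h := hiter n
    set a := (x n).1
    set b := (x n).2
    have h1 : (x (n+1)).1 - (x (n+1)).2 = (1 - 2*c) * (f a - f b) := by
      rw [h]; ring
    have hfab : |f a - f b| ≤ 2 * |a - b| := by
      rw [hf, hf]
      have : (1 - 2 * |a - 1/2|) - (1 - 2 * |b - 1/2|) = 2 * (|b - 1/2| - |a - 1/2|) := by ring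
      rw [this, abs_mul, abs_two]
      have := abs_abs_sub_abs_le_abs_sub (b - 1/2) (a - 1/2)
      have h2 : b - 1/2 - (a - 1/2) = b - a := by ring
      rw [h2] at this
      rw [abs_sub_comm a b]
      linarith
    rw [h1, abs_mul]
    calc |1 - 2*c| * |f a - f b| ≤ |1 - 2*c| * (2 * |a - b|) := by
          exact mul_le_mul_of_nonneg_left hfab (abs_nonneg _)
      _ = (2 * |1 - 2*c|) * |a - b| := by ring
  have hbound : ∀ n, |(x n).1 - (x n).2| ≤ (2 * |1 - 2 * c|) ^ n * |(x 0).1 - (x 0).2| := by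
    intro n
    induction n with
    | zero => simp
    | succ k ih =>
      calc |(x (k+1)).1 - (x (k+1)).2| ≤ (2 * |1 - 2 * c|) * |(x k).1 - (x k).2| := hstep k
        _ ≤ (2 * |1 - 2 * c|) * ((2 * |1 - 2 * c|) ^ k * |(x 0).1 - (x 0).2|) := by
            exact mul_le_mul_of_nonneg_left ih hr0
        _ = (2 * |1 - 2 * c|) ^ (k+1) * |(x 0).1 - (x 0).2| := by ring
  refine ⟨hbound, ?_⟩
  have hgeo : Filter.Tendsto (fun n => (2 * |1 - 2 * c|) ^ n * |(x 0).1 - (x 0).2|)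
      Filter.atTop (nhds 0) := by
    have := tendsto_pow_atTop_nhds_zero_of_lt_one hr0 hr
    simpa using this.mul_const |(x 0).1 - (x 0).2|
  exact squeeze_zero (fun n => abs_nonneg _) hbound hgeo
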